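/- Over a positive semiring K with finite domain A, a sentence of the form ∃x₁ … ∃xₙ φ, where φ is built only from K-relation atoms, ∧ and ∨ (no equality atoms), has nonzero value under a K-interpretation π if and only if the Boolean-semiring sentence obtained by replacing each atomic value π(R(ā)) with its support (1 if nonzero, 0 if zero) is true; i.e., nonzero-ness of the semiring value is determined by the supports of the atomic facts. -/
import Mathlib


universe u v

/-- Positive existential first-order formulas: relation atoms applied to variable
tuples, conjunction, disjunction and existential quantification (no equality
atoms).  A sentence `∃x₁ … ∃xₙ φ` with `φ` quantifier-free is a special case. -/
inductive PosForm where
  | atom : Nat → List Nat → PosForm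
  | conj : PosForm → PosForm → PosForm
  | disj : PosForm → PosForm → PosForm
  | ex : Nat → PosForm → PosForm

/-- Semiring semantics over a finite domain `A` and `K`-interpretation `π`. -/
def PosForm.evalK {K : Type u} {A : Type v} [CommSemiring K] [Fintype A]
    (π : Nat → List A → K) (s : Nat → A) : PosForm → K
  | .atom R xs => π R (xs.map s)
  | .conj φ ψ => PosForm.evalK π s φ * PosForm.evalK π s ψ
  | .disj φ ψ => PosForm.evalK π s φ + PosForm.evalK π s ψ
  | .ex x φ => ∑ a : A, PosForm.evalK π (Function.update s x a) φ

/-- Boolean-semiring semantics of the same formula with each atomic value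
replaced by its support (`1` iff nonzero): sums become disjunctions and
products become conjunctions. -/
def PosForm.evalSupp {K : Type u} {A : Type v} [CommSemiring K] [Fintype A]
    (π : Nat → List A → K) (s : Nat → A) : PosForm → Prop
  | .atom R xs => π R (xs.map s) ≠ 0
  | .conj φ ψ => PosForm.evalSupp π s φ ∧ PosForm.evalSupp π s ψ
  | .disj φ ψ => PosForm.evalSupp π s φ ∨ PosForm.evalSupp π s ψ
  | .ex x φ => ∃ a : A, PosForm.evalSupp π (Function.update s x a) φ

lemma sum_eq_zero_of_pos {K : Type u} {ι : Type v} [CommSemiring K]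
    (hadd : ∀ a b : K, a + b = 0 → a = 0 ∧ b = 0)
    (t : Finset ι) (f : ι → K) (h : ∑ i ∈ t, f i = 0) : ∀ i ∈ t, f i = 0 := by
  induction t using Finset.cons_induction with
  | empty => simp
  | cons a t ha ih =>
    rw [Finset.sum_cons] at h
    obtain ⟨h1, h2⟩ := hadd _ _ h
    intro i hi
    rcases Finset.mem_cons.mp hi with rfl | hi
    · exact h1
    · exact ih h2 i hi

/-- Over a positive semiring, the value of a positive existential formula is
nonzero iff the induced Boolean-semiring sentence (atoms replaced by their
supports) is true. -/
theorem posForm_ne_zero_iff_support (K : Type u) (A : Type v) [CommSemiring K]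
    [Fintype A]
    (hmul : ∀ a b : K, a ≠ 0 → b ≠ 0 → a * b ≠ 0)
    (hadd : ∀ a b : K, a + b = 0 → a = 0 ∧ b = 0)
    (π : Nat → List A → K) (s : Nat → A) (φ : PosForm) :
    PosForm.evalK π s φ ≠ 0 ↔ PosForm.evalSupp π s φ := by
  induction φ generalizing s with
  | atom R xs => simp [PosForm.evalK, PosForm.evalSupp]
  | conj φ ψ ihφ ihψ =>
    simp only [PosForm.evalK, PosForm.evalSupp, ← ihφ, ← ihψ]
    constructor
    · intro h
      refine ⟨fun h0 => h ?_, fun h0 => h ?_⟩ <;> simp [h0]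
    · rintro ⟨h1, h2⟩; exact hmul _ _ h1 h2
  | disj φ ψ ihφ ihψ =>
    simp only [PosForm.evalK, PosForm.evalSupp, ← ihφ, ← ihψ]
    constructor
    · intro h
      by_contra hc
      push_neg at hc
      simp [hc.1, hc.2] at h
    · rintro (h | h) h0
      · exact h (hadd _ _ h0).1
      · exact h (hadd _ _ h0).2
  | ex x φ ih =>
    simp only [PosForm.evalK, PosForm.evalSupp, ← ih]
    constructor
    · intro h
      by_contra hc
      push_neg at hc
      exact h (Finset.sum_eq_zero fun a _ => hc a)
    · rintro ⟨a, ha⟩ h0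
      exact ha (sum_eq_zero_of_pos hadd _ _ h0 a (Finset.mem_univ a))
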